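/- arXiv:2303.14113 — 2 statements merged into one kernel-verified Lean document; each statement's English description precedes it below -/
import Mathlib

section
/- Suppose γ : [θ̲, θ̄] → ℝ is integrable and monotone nondecreasing, and the payment rule is r(θ) = ∫_{θ̲}^{θ} γ(y) dy − θγ(θ) − V(θ). Then the mechanism is incentive compatible: for all θ, θ̂ ∈ [θ̲, θ̄], V(θ) + θγ(θ) + r(θ) ≥ V(θ̂) + θγ(θ̂) + r(θ̂). -/
open Set MeasureTheory

theorem MonotoneOn.sub_mul_le_intervalIntegral {γ : ℝ → ℝ} {a b : ℝ}
    (hγ : MonotoneOn γ (uIcc a b)) : (b - a) * γ a ≤ ∫ x in a..b, γ x := by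
  have hint : IntervalIntegrable γ volume a b := hγ.intervalIntegrable
  rcases le_total a b with hab | hba
  · rw [uIcc_of_le hab] at hγ
    have h := intervalIntegral.integral_mono_on hab intervalIntegrable_const hint
      fun x hx => hγ (left_mem_Icc.2 hab) hx hx.1
    simpa [mul_comm] using h
  · rw [uIcc_of_ge hba] at hγ
    have h := intervalIntegral.integral_mono_on hba hint.symm intervalIntegrable_const
      fun x hx => hγ hx (right_mem_Icc.2 hba) hx.2
    rw [intervalIntegral.integral_symm] at h
    simp only [intervalIntegral.integral_const, smul_eq_mul] at h
    linarith

theorem stmt_3_general (θl θh : ℝ) (V γ r : ℝ → ℝ)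
    (hmono : MonotoneOn γ (Set.Icc θl θh))
    (hr : ∀ θ ∈ Set.Icc θl θh, r θ = (∫ y in θl..θ, γ y) - θ * γ θ - V θ) :
    ∀ θ ∈ Set.Icc θl θh, ∀ θ' ∈ Set.Icc θl θh,
      V θ' + θ * γ θ' + r θ' ≤ V θ + θ * γ θ + r θ := by
  intro θ hθ θ' hθ'
  have hθl : θl ∈ Icc θl θh := ⟨le_rfl, hθ.1.trans hθ.2⟩
  have hγ : MonotoneOn γ (uIcc θ' θ) := hmono.mono (uIcc_subset_Icc hθ' hθ)
  have hsplit : (∫ y in θl..θ', γ y) + (∫ y in θ'..θ, γ y) = ∫ y in θl..θ, γ y :=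
    intervalIntegral.integral_add_adjacent_intervals
      (hmono.mono (uIcc_subset_Icc hθl hθ')).intervalIntegrable hγ.intervalIntegrable
  rw [hr θ hθ, hr θ' hθ', ← hsplit]
  linarith [hγ.sub_mul_le_intervalIntegral]

/-- with the payment rule r(θ) = ∫_{θ̲}^{θ} γ − θγ(θ) − V(θ) and γ
monotone nondecreasing and integrable, the mechanism is incentive compatible. -/
theorem stmt_3 (θl θh : ℝ) (hle : θl ≤ θh) (V γ r : ℝ → ℝ)
    (hmono : MonotoneOn γ (Set.Icc θl θh))
    (hint : IntervalIntegrable γ MeasureTheory.volume θl θh)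
    (hr : ∀ θ ∈ Set.Icc θl θh, r θ = (∫ y in θl..θ, γ y) - θ * γ θ - V θ) :
    ∀ θ ∈ Set.Icc θl θh, ∀ θ' ∈ Set.Icc θl θh,
      V θ' + θ * γ θ' + r θ' ≤ V θ + θ * γ θ + r θ :=
  stmt_3_general θl θh V γ r hmono hr
end

section
/- Let x(θ) = (s+a−p)[(t+b)I_N − (M_φ(θ)G + Gᵀ M_φ(θ))]⁻¹ 𝟙 with s + a > p, g_{ij} ≥ 0, φ nondecreasing with values in [0, θ̄], and t + b > θ̄ max_i Σ_j (g_{ij} + g_{ji}). Then each coordinate x_j(θ) is nonnegative and nondecreasing in each θ_i. -/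
/-!
With `C θ = M_φ(θ) G + Gᵀ M_φ(θ)` entrywise nonnegative with row sums below `c = t + b`, the
matrix `A = c • 1 - C` satisfies a minimum principle: `A x ≥ 0` forces `x ≥ 0` (look at a smallest
coordinate of `x`). This makes `A` invertible with `A⁻¹` order preserving, which gives
nonnegativity. Raising `θ_i` can only increase `C`, to `C'` say, and for `y = A⁻¹ 𝟙`,
`y' = A'⁻¹ 𝟙` one has `A' (y' - y) = (C' - C) y ≥ 0`, so `y ≤ y'`.
-/

open Matrix

section MinimumPrinciple

variable {n : Type*} [Fintype n] [DecidableEq n] {c : ℝ}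

theorem smul_one_sub_mulVec_apply (C : Matrix n n ℝ) (x : n → ℝ) (k : n) :
    ((c • 1 - C) *ᵥ x) k = c * x k - ∑ j, C k j * x j := by
  rw [sub_mulVec, smul_mulVec, one_mulVec]
  rfl

theorem nonneg_of_smul_one_sub_mulVec_nonneg {C : Matrix n n ℝ} (hC : ∀ i j, 0 ≤ C i j)
    (hrow : ∀ i, ∑ j, C i j < c) {x : n → ℝ} (hx : 0 ≤ (c • 1 - C) *ᵥ x) : 0 ≤ x := by
  by_contra hneg
  obtain ⟨i, hi⟩ : ∃ i, x i < 0 := by simpa [Pi.le_def] using hneg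
  obtain ⟨k, -, hk⟩ := Finset.univ.exists_min_image x ⟨i, Finset.mem_univ i⟩
  have hxk : x k < 0 := (hk i (Finset.mem_univ i)).trans_lt hi
  have hcx : ∑ j, C k j * x j ≤ c * x k := by
    simpa [smul_one_sub_mulVec_apply] using hx k
  have hmin : (∑ j, C k j) * x k ≤ ∑ j, C k j * x j := by
    rw [Finset.sum_mul]
    exact Finset.sum_le_sum fun j _ => mul_le_mul_of_nonneg_left (hk j (Finset.mem_univ j)) (hC k j)
  nlinarith [hrow k]

variable {C : Matrix n n ℝ}

theorem isUnit_smul_one_sub (hC : ∀ i j, 0 ≤ C i j) (hrow : ∀ i, ∑ j, C i j < c) :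
    IsUnit (c • 1 - C) := by
  refine mulVec_injective_iff_isUnit.mp fun x y hxy => ?_
  have h : (c • 1 - C) *ᵥ (x - y) = 0 := by rw [mulVec_sub, hxy, sub_self]
  have h' : (c • 1 - C) *ᵥ (y - x) = 0 := by rw [mulVec_sub, hxy, sub_self]
  have hxy := nonneg_of_smul_one_sub_mulVec_nonneg hC hrow h.ge
  have hyx := nonneg_of_smul_one_sub_mulVec_nonneg hC hrow h'.ge
  exact le_antisymm (sub_nonneg.mp hyx) (sub_nonneg.mp hxy)

theorem smul_one_sub_mulVec_inv_mulVec (hC : ∀ i j, 0 ≤ C i j) (hrow : ∀ i, ∑ j, C i j < c)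
    (v : n → ℝ) : (c • 1 - C) *ᵥ ((c • 1 - C)⁻¹ *ᵥ v) = v := by
  rw [mulVec_mulVec, mul_nonsing_inv _ ((isUnit_iff_isUnit_det _).mp (isUnit_smul_one_sub hC hrow)),
    one_mulVec]

theorem inv_smul_one_sub_mulVec_nonneg (hC : ∀ i j, 0 ≤ C i j) (hrow : ∀ i, ∑ j, C i j < c)
    {v : n → ℝ} (hv : 0 ≤ v) : 0 ≤ (c • 1 - C)⁻¹ *ᵥ v :=
  nonneg_of_smul_one_sub_mulVec_nonneg hC hrow (by rwa [smul_one_sub_mulVec_inv_mulVec hC hrow])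

theorem inv_smul_one_sub_mulVec_mono {C₁ C₂ : Matrix n n ℝ} (hC₁ : ∀ i j, 0 ≤ C₁ i j)
    (hC₁₂ : ∀ i j, C₁ i j ≤ C₂ i j) (hrow : ∀ i, ∑ j, C₂ i j < c) {v : n → ℝ} (hv : 0 ≤ v) :
    (c • 1 - C₁)⁻¹ *ᵥ v ≤ (c • 1 - C₂)⁻¹ *ᵥ v := by
  have hC₂ : ∀ i j, 0 ≤ C₂ i j := fun i j => (hC₁ i j).trans (hC₁₂ i j)
  have hrow₁ : ∀ i, ∑ j, C₁ i j < c := fun i =>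
    (Finset.sum_le_sum fun j _ => hC₁₂ i j).trans_lt (hrow i)
  set y₁ := (c • 1 - C₁)⁻¹ *ᵥ v
  set y₂ := (c • 1 - C₂)⁻¹ *ᵥ v
  have hdiff : (c • 1 - C₂) *ᵥ (y₂ - y₁) = (C₂ - C₁) *ᵥ y₁ := by
    rw [mulVec_sub, smul_one_sub_mulVec_inv_mulVec hC₂ hrow]
    conv_lhs => rw [← smul_one_sub_mulVec_inv_mulVec hC₁ hrow₁ v]
    rw [← sub_mulVec]
    congr 1
    abel
  have hy₁ : 0 ≤ y₁ := inv_smul_one_sub_mulVec_nonneg hC₁ hrow₁ hv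
  have hpos : 0 ≤ (C₂ - C₁) *ᵥ y₁ := fun k =>
    Finset.sum_nonneg fun j _ => mul_nonneg (sub_nonneg.mpr (hC₁₂ k j)) (hy₁ j)
  exact sub_nonneg.mp (nonneg_of_smul_one_sub_mulVec_nonneg hC₂ hrow (hdiff ▸ hpos))

end MinimumPrinciple

theorem diagonal_mul_add_transpose_mul_diagonal_apply {n : Type*} [Fintype n] [DecidableEq n]
    (d : n → ℝ) (G : Matrix n n ℝ) (i j : n) :
    (diagonal d * G + Gᵀ * diagonal d) i j = d i * G i j + G j i * d j := by
  simp [diagonal_mul, mul_diagonal]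

theorem stmt_14_general {N : ℕ} (s a p t b θbar : ℝ) (hsap : p < s + a)
    (G : Matrix (Fin N) (Fin N) ℝ) (hG : ∀ i j, 0 ≤ G i j)
    (φ : ℝ → ℝ) (hφmono : Monotone φ) (hφrange : ∀ y, φ y ∈ Set.Icc 0 θbar)
    (hdom : ∀ i, θbar * ∑ j, (G i j + G j i) < t + b)
    (x : (Fin N → ℝ) → Fin N → ℝ)
    (hx : ∀ θ, x θ = (s + a - p) •
      (((t + b) • (1 : Matrix (Fin N) (Fin N) ℝ) -
        (Matrix.diagonal (fun k => φ (θ k)) * G + Gᵀ * Matrix.diagonal (fun k => φ (θ k))))⁻¹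
        *ᵥ fun _ => 1)) :
    (∀ θ j, 0 ≤ x θ j) ∧
    (∀ (θ : Fin N → ℝ) (i j : Fin N) (s₁ s₂ : ℝ), s₁ ≤ s₂ →
      x (Function.update θ i s₁) j ≤ x (Function.update θ i s₂) j) := by
  set C : (Fin N → ℝ) → Matrix (Fin N) (Fin N) ℝ := fun θ =>
    diagonal (fun k => φ (θ k)) * G + Gᵀ * diagonal (fun k => φ (θ k))
  have hC : ∀ θ i j, C θ i j = φ (θ i) * G i j + G j i * φ (θ j) := fun θ =>
    diagonal_mul_add_transpose_mul_diagonal_apply _ G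
  have hC_nonneg : ∀ θ i j, 0 ≤ C θ i j := fun θ i j => by
    rw [hC]
    exact add_nonneg (mul_nonneg (hφrange _).1 (hG i j)) (mul_nonneg (hG j i) (hφrange _).1)
  have hC_row : ∀ θ i, ∑ j, C θ i j < t + b := fun θ i => by
    refine lt_of_le_of_lt ?_ (hdom i)
    rw [Finset.mul_sum]
    refine Finset.sum_le_sum fun j _ => ?_
    rw [hC, mul_add, mul_comm θbar (G j i)]
    exact add_le_add (mul_le_mul_of_nonneg_right (hφrange _).2 (hG i j))
      (mul_le_mul_of_nonneg_left (hφrange _).2 (hG j i))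
  have hone : (0 : Fin N → ℝ) ≤ fun _ => 1 := fun _ => zero_le_one
  have hspa : 0 ≤ s + a - p := by linarith
  refine ⟨fun θ j => ?_, fun θ i j s₁ s₂ hs => ?_⟩
  · rw [hx]
    exact smul_nonneg hspa (inv_smul_one_sub_mulVec_nonneg (hC_nonneg θ) (hC_row θ) hone) j
  · have hφθ : ∀ k, φ (Function.update θ i s₁ k) ≤ φ (Function.update θ i s₂ k) := fun k => by
      rcases eq_or_ne k i with rfl | hk
      · simpa using hφmono hs
      · simp [Function.update_of_ne hk]
    have hC_mono : ∀ k l, C (Function.update θ i s₁) k l ≤ C (Function.update θ i s₂) k l :=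
      fun k l => by
        rw [hC, hC]
        exact add_le_add (mul_le_mul_of_nonneg_right (hφθ k) (hG k l))
          (mul_le_mul_of_nonneg_left (hφθ l) (hG l k))
    rw [hx, hx]
    exact smul_le_smul_of_nonneg_left
      (inv_smul_one_sub_mulVec_mono (hC_nonneg _) hC_mono (hC_row _) hone) hspa j

/-- the optimal demand x(θ) = (s+a−p)[(t+b)I − (M_φG + GᵀM_φ)]⁻¹𝟙
is coordinatewise nonnegative and nondecreasing in each type θ_i. -/
theorem stmt_14 {N : ℕ} (s a p t b θbar : ℝ) (hsap : p < s + a) (hθ : 0 < θbar)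
    (G : Matrix (Fin N) (Fin N) ℝ) (hG : ∀ i j, 0 ≤ G i j)
    (φ : ℝ → ℝ) (hφmono : Monotone φ) (hφrange : ∀ y, φ y ∈ Set.Icc 0 θbar)
    (hdom : ∀ i, θbar * ∑ j, (G i j + G j i) < t + b)
    (x : (Fin N → ℝ) → Fin N → ℝ)
    (hx : ∀ θ, x θ = (s + a - p) •
      (((t + b) • (1 : Matrix (Fin N) (Fin N) ℝ) -
        (Matrix.diagonal (fun k => φ (θ k)) * G + Gᵀ * Matrix.diagonal (fun k => φ (θ k))))⁻¹
        *ᵥ fun _ => 1)) :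
    (∀ θ j, 0 ≤ x θ j) ∧
    (∀ (θ : Fin N → ℝ) (i j : Fin N) (s₁ s₂ : ℝ), s₁ ≤ s₂ →
      x (Function.update θ i s₁) j ≤ x (Function.update θ i s₂) j) :=
  stmt_14_general s a p t b θbar hsap G hG φ hφmono hφrange hdom x hx
end
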